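/- Let x_1, …, x_K be vertices of K pairwise distinct receiver states (H_1, V_1), …, (H_K, V_K) over N such that every pair of these vertices satisfies BC1* or BC2*, and let x_m be a vertex of minimum cardinality among x_1, …, x_K. Then the packet combination P = x_m benefits every vertex x_j with x_j ∩ x_m ≠ ∅ (including x_m itself), and P ⊆ H_j for every index j with x_j ∩ x_m = ∅. (Basis of the packet-combination determination procedure.) -/

import Mathlib

/-- A receiver state over a finite set `N` of packets: a Has set `H ⊆ N` together with
a family `V` of nonempty, pairwise disjoint packet sets (the vertices) whose union is `N \ H`. -/
structure ReceiverState (N : Finset ℕ) where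
  H : Finset ℕ
  V : Finset (Finset ℕ)
  has_subset : H ⊆ N
  vertex_nonempty : ∀ x ∈ V, x.Nonempty
  vertex_disjoint : ∀ x ∈ V, ∀ y ∈ V, x ≠ y → Disjoint x y
  vertex_union : V.sup id = N \ H

/-- `P` is instantly decodable for vertex `x` of receiver state `R`. -/
def InstantlyDecodable {N : Finset ℕ} (R : ReceiverState N) (x P : Finset ℕ) : Prop :=
  P ⊆ x ∪ R.H ∧ (P ∩ x).Nonempty

/-- `P` is aggregating for vertex `x` of receiver state `R`. -/
def Aggregating {N : Finset ℕ} (R : ReceiverState N) (x P : Finset ℕ) : Prop :=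
  ∃ y ∈ R.V, y ≠ x ∧ P ⊆ x ∪ y ∪ R.H ∧ (P ∩ x).Nonempty ∧ (P ∩ y).Nonempty

/-- `P` benefits vertex `x` of receiver state `R`. -/
def Benefits {N : Finset ℕ} (R : ReceiverState N) (x P : Finset ℕ) : Prop :=
  InstantlyDecodable R x P ∨ Aggregating R x P

/-- Condition BC1 between vertices `x` and `y` of two different receiver states. -/
def BC1 (x y : Finset ℕ) : Prop := (x ∩ y).Nonempty

/-- Condition BC2 between vertex `x` of `Ri` and vertex `y` of `Rk`. -/
def BC2 {N : Finset ℕ} (Ri Rk : ReceiverState N) (x y : Finset ℕ) : Prop :=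
  x ∩ y = ∅ ∧ (x ∩ Rk.H).Nonempty ∧ (y ∩ Ri.H).Nonempty

/-- The condition of BC1* for `x` and `y` written so that `|x| ≤ |y|`, where `Hk` is the
Has set of the receiver of `y`. -/
def BC1starCond (Hk : Finset ℕ) (x y : Finset ℕ) : Prop :=
  (x.card = 1 → x ⊆ y) ∧
  (x.card = y.card → 2 ≤ x.card → x.card - 1 ≤ (x ∩ y).card) ∧
  (x.card < y.card → 2 ≤ x.card → (x \ Hk).card - 1 ≤ ((x \ Hk) ∩ y).card)

/-- Condition BC1* between vertex `x` of `Ri` and vertex `y` of `Rk`. -/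
def BC1star {N : Finset ℕ} (Ri Rk : ReceiverState N) (x y : Finset ℕ) : Prop :=
  (x ∩ y).Nonempty ∧
  (x.card ≤ y.card → BC1starCond Rk.H x y) ∧
  (y.card ≤ x.card → BC1starCond Ri.H y x)

/-- Condition BC2* between vertex `x` of `Ri` and vertex `y` of `Rk`. -/
def BC2star {N : Finset ℕ} (Ri Rk : ReceiverState N) (x y : Finset ℕ) : Prop :=
  x ∩ y = ∅ ∧ x ⊆ Rk.H ∧ y ⊆ Ri.H

/-!
Since `x m` has minimum cardinality, every vertex `x j ≠ x m` meeting `x m` satisfies BC1* with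
`x m` on the smaller side, and in all three cases BC1* says that at most one packet of `x m` lies
outside `x j ∪ H j`. If there is none, `x m` is instantly decodable for `x j`; if there is one, it
lies in another vertex `y` of receiver `j`, and `x m` is aggregating for `x j` through `y`.
A vertex disjoint from `x m` cannot satisfy BC1*, so BC2* puts `x m` into its Has set.
-/

namespace ReceiverState

variable {N : Finset ℕ} (R : ReceiverState N)

theorem subset_of_mem_V {x : Finset ℕ} (hx : x ∈ R.V) : x ⊆ N := by
  intro p hp
  have hp' : p ∈ R.V.sup id := Finset.le_sup (f := id) hx hp
  rw [R.vertex_union] at hp'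
  exact (Finset.mem_sdiff.mp hp').1

theorem exists_mem_V_of_notMem_H {p : ℕ} (hpN : p ∈ N) (hpH : p ∉ R.H) : ∃ y ∈ R.V, p ∈ y := by
  have hp : p ∈ R.V.sup id := by rw [R.vertex_union]; exact Finset.mem_sdiff.mpr ⟨hpN, hpH⟩
  simpa using Finset.mem_sup.mp hp

theorem benefits_of_card_sdiff_le_one {x P : Finset ℕ} (hP : P ⊆ N) (hPx : (P ∩ x).Nonempty)
    (hcard : ((P \ R.H) \ x).card ≤ 1) : Benefits R x P := by
  have hcover : ∀ q ∈ P, q ∈ x ∨ q ∈ R.H ∨ q ∈ (P \ R.H) \ x := by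
    intro q hq
    simp only [Finset.mem_sdiff]
    tauto
  obtain ⟨p, hp⟩ := Finset.card_le_one_iff_subset_singleton.mp hcard
  rcases Finset.subset_singleton_iff.mp hp with hempty | hsingle
  · refine Or.inl ⟨fun q hq => ?_, hPx⟩
    simpa [hempty, or_comm] using hcover q hq
  · have hpP : p ∈ (P \ R.H) \ x := hsingle ▸ Finset.mem_singleton_self p
    simp only [Finset.mem_sdiff] at hpP
    obtain ⟨⟨hpP, hpH⟩, hpx⟩ := hpP
    obtain ⟨y, hyV, hpy⟩ := R.exists_mem_V_of_notMem_H (hP hpP) hpH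
    refine Or.inr ⟨y, hyV, fun hyx => hpx (hyx ▸ hpy), fun q hq => ?_, hPx, ⟨p, by simp [hpP, hpy]⟩⟩
    rcases hcover q hq with hqx | hqH | hqp
    · simp [hqx]
    · simp [hqH]
    · rw [hsingle, Finset.mem_singleton] at hqp
      simp [hqp, hpy]

end ReceiverState

theorem BC1starCond.card_sdiff_sdiff_le_one {H x y : Finset ℕ} (h : BC1starCond H x y)
    (hxy : x.card ≤ y.card) : ((x \ H) \ y).card ≤ 1 := by
  obtain ⟨hone, heq, hlt⟩ := h
  rcases Nat.lt_or_ge x.card 2 with hsmall | htwo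
  · obtain hx | hx : x.card = 0 ∨ x.card = 1 := by omega
    · simp [Finset.card_eq_zero.mp hx]
    · rw [Finset.sdiff_eq_empty_iff_subset.mpr (Finset.sdiff_subset.trans (hone hx))]
      simp
  rcases hxy.lt_or_eq with hxy | hxy
  · have := Finset.card_inter_add_card_sdiff (x \ H) y
    have := hlt hxy htwo
    omega
  · have := Finset.card_inter_add_card_sdiff x y
    have := heq hxy htwo
    have : ((x \ H) \ y).card ≤ (x \ y).card :=
      Finset.card_le_card (Finset.sdiff_subset_sdiff Finset.sdiff_subset le_rfl)
    omega

theorem stmt14_general {N : Finset ℕ} {K : ℕ}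
    (R : Fin K → ReceiverState N) (x : Fin K → Finset ℕ)
    (hx : ∀ j, x j ∈ (R j).V)
    (hBC : ∀ j l, j ≠ l →
      BC1star (R j) (R l) (x j) (x l) ∨ BC2star (R j) (R l) (x j) (x l))
    (m : Fin K) (hm : ∀ j, (x m).card ≤ (x j).card) :
    (∀ j, (x j ∩ x m).Nonempty → Benefits (R j) (x j) (x m)) ∧
    (∀ j, x j ∩ x m = ∅ → x m ⊆ (R j).H) := by
  constructor
  · intro j hjm
    refine (R j).benefits_of_card_sdiff_le_one ((R m).subset_of_mem_V (hx m))
      (Finset.inter_comm (x j) (x m) ▸ hjm) ?_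
    by_cases hjeq : j = m
    · subst hjeq
      simp
    rcases hBC j m hjeq with hBC1 | hBC2
    · exact (hBC1.2.2 (hm j)).card_sdiff_sdiff_le_one (hm j)
    · exact absurd hBC2.1 hjm.ne_empty
  · intro j hjm
    by_cases hjeq : j = m
    · subst hjeq
      exact absurd (Finset.inter_self (x j) ▸ hjm) ((R j).vertex_nonempty _ (hx j)).ne_empty
    rcases hBC j m hjeq with hBC1 | hBC2
    · exact absurd hjm hBC1.1.ne_empty
    · exact hBC2.2.2

/-- Basis of the packet-combination determination procedure: if the vertices pairwise
satisfy BC1* or BC2* and `x m` has minimum cardinality, then the combination `x m`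
benefits every vertex intersecting `x m` (including `x m` itself), and is entirely in
the Has set of every receiver whose vertex is disjoint from `x m`. -/
theorem stmt14 {N : Finset ℕ} {K : ℕ}
    (R : Fin K → ReceiverState N) (x : Fin K → Finset ℕ)
    (hdist : ∀ j l, j ≠ l → R j ≠ R l)
    (hx : ∀ j, x j ∈ (R j).V)
    (hBC : ∀ j l, j ≠ l →
      BC1star (R j) (R l) (x j) (x l) ∨ BC2star (R j) (R l) (x j) (x l))
    (m : Fin K) (hm : ∀ j, (x m).card ≤ (x j).card) :
    (∀ j, (x j ∩ x m).Nonempty → Benefits (R j) (x j) (x m)) ∧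
    (∀ j, x j ∩ x m = ∅ → x m ⊆ (R j).H) :=
  stmt14_general R x hx hBC m hm
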